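/- If μ̂₁(a) exists, then the eigenfunction y = u - (u'(μ̂₁)/v'(μ̂₁)) v of the systems-focal boundary problem satisfies y'(μ̂₁) = 0, Ty(μ̂₁) = 0, y(a) = 0, (r y'')(a) = 0, and moreover y > 0, y' > 0, and Ty < 0 on (a, μ̂₁). -/

import Mathlib

open Set Filter MeasureTheory intervalIntegral

/-- `T4 r q y = (r y'')' - q y'`. -/
noncomputable def T4 (r q y : ℝ → ℝ) : ℝ → ℝ :=
  fun x => deriv (fun s => r s * deriv (deriv y) s) x - q x * deriv y x

/-- `y` solves `(r y'')'' - (q y')' = p y`, written as `(Ty)' = p y`. -/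
def IsSol4 (r p q y : ℝ → ℝ) : Prop :=
  ∀ x, deriv (T4 r q y) x = p x * y x

/-- `σ̂ = u v' - v u'`. -/
noncomputable def sigmaHat (u v : ℝ → ℝ) : ℝ → ℝ :=
  fun x => u x * deriv v x - v x * deriv u x

/-- `τ̂ = u ⬝ Tv - v ⬝ Tu`. -/
noncomputable def tauHat (r q u v : ℝ → ℝ) : ℝ → ℝ :=
  fun x => u x * T4 r q v x - v x * T4 r q u x

/-- `ρ̂ = u₁ ⬝ Tv - v₁ ⬝ Tu` where `y₁ = r y''`. -/
noncomputable def rhoHat (r q u v : ℝ → ℝ) : ℝ → ℝ :=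
  fun x => (r x * deriv (deriv u) x) * T4 r q v x - (r x * deriv (deriv v) x) * T4 r q u x

/-- Initial conditions of the fundamental solutions `u`, `v`:
`u(a) = u₁(a) = Tu(a) = 0`, `u'(a) = 1`, and `v(a) = v'(a) = v₁(a) = 0`, `Tv(a) = 1`. -/
def FundIC (r q : ℝ → ℝ) (a : ℝ) (u v : ℝ → ℝ) : Prop :=
  u a = 0 ∧ r a * deriv (deriv u) a = 0 ∧ T4 r q u a = 0 ∧ deriv u a = 1 ∧
  v a = 0 ∧ deriv v a = 0 ∧ r a * deriv (deriv v) a = 0 ∧ T4 r q v a = 1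

/-!
On solutions, `((r u'') v' - (r v'') u')' = Tu v' - Tv u' = -τ̂'`; with the initial
conditions at `a` this gives `r (u'' v' - u' v'') = -τ̂ < 0` on `(a, μ̂₁]`, so `δ₁ = u'/v'`
is strictly decreasing there. Hence `y' = v' (δ₁ - δ₁(μ̂₁)) > 0` on `(a, μ̂₁)`, and `y > 0`
as `y(a) = 0`. Finally `(Ty)' = p y > 0` and `Ty(μ̂₁) = 0`, the latter being
`τ̂'(μ̂₁) = u' Tv - v' Tu = 0`; so `Ty < 0` on `(a, μ̂₁)`.
-/

theorem eq_of_hasDerivAt_eq_zero {f : ℝ → ℝ} {a b : ℝ} (hab : a ≤ b)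
    (hf : ContinuousOn f (Icc a b)) (hf' : ∀ x ∈ Ioo a b, HasDerivAt f 0 x) : f b = f a := by
  rcases hab.eq_or_lt with rfl | hlt
  · rfl
  obtain ⟨c, -, hc⟩ := exists_hasDerivAt_eq_slope f (fun _ => 0) hlt hf hf'
  rw [eq_div_iff (sub_ne_zero.2 hlt.ne')] at hc
  linarith

theorem pos_of_hasDerivAt_pos {f f' : ℝ → ℝ} {a b : ℝ} (hf : ContinuousOn f (Icc a b))
    (hf' : ∀ x ∈ Ioo a b, HasDerivAt f (f' x) x) (hf'₀ : ∀ x ∈ Ioo a b, 0 < f' x)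
    (hfa : f a = 0) : ∀ x ∈ Ioc a b, 0 < f x := by
  have hmono : StrictMonoOn f (Icc a b) :=
    strictMonoOn_of_hasDerivWithinAt_pos (convex_Icc a b) hf
      (fun x hx => (hf' x (by rwa [interior_Icc] at hx)).hasDerivWithinAt) (by rwa [interior_Icc])
  intro x hx
  simpa [hfa] using hmono (left_mem_Icc.2 (hx.1.le.trans hx.2)) (Ioc_subset_Icc_self hx) hx.1

theorem neg_of_hasDerivAt_pos {f f' : ℝ → ℝ} {a b : ℝ}
    (hf' : ∀ x ∈ Ioc a b, HasDerivAt f (f' x) x) (hf'₀ : ∀ x ∈ Ioo a b, 0 < f' x)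
    (hfb : f b = 0) : ∀ x ∈ Ioo a b, f x < 0 := by
  have hmono : StrictMonoOn f (Ioc a b) :=
    strictMonoOn_of_hasDerivWithinAt_pos (convex_Ioc a b)
      (fun x hx => (hf' x hx).continuousAt.continuousWithinAt)
      (fun x hx => (hf' x (interior_subset hx)).hasDerivWithinAt) (by rwa [interior_Ioc])
  intro x hx
  simpa [hfb] using hmono (Ioo_subset_Ioc_self hx) (right_mem_Ioc.2 (hx.1.trans hx.2)) hx.2

theorem strictAntiOn_div_of_deriv_mul_sub_mul_deriv_neg {f g : ℝ → ℝ} {s : Set ℝ}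
    (hs : Convex ℝ s) (hf : Differentiable ℝ f) (hg : Differentiable ℝ g)
    (hg₀ : ∀ x ∈ s, g x ≠ 0)
    (hfg : ∀ x ∈ interior s, deriv f x * g x - f x * deriv g x < 0) :
    StrictAntiOn (fun x => f x / g x) s := by
  refine strictAntiOn_of_deriv_neg hs
    (hf.continuous.continuousOn.div hg.continuous.continuousOn hg₀) fun x hx => ?_
  rw [deriv_fun_div (hf x) (hg x) (hg₀ x (interior_subset hx))]
  exact div_neg_of_neg_of_pos (hfg x hx) (pow_two_pos_of_ne_zero (hg₀ x (interior_subset hx)))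

theorem sub_div_mul_pos_of_strictAntiOn {f g : ℝ → ℝ} {s : Set ℝ} {x b : ℝ}
    (hfg : StrictAntiOn (fun x => f x / g x) s) (hx : x ∈ s) (hb : b ∈ s) (hxb : x < b)
    (hg : 0 < g x) : 0 < f x - f b / g b * g x := by
  have := (lt_div_iff₀ hg).mp (hfg hx hb hxb)
  linarith

theorem deriv_sub_const_mul {u v : ℝ → ℝ} (c : ℝ) (hu : Differentiable ℝ u)
    (hv : Differentiable ℝ v) :
    deriv (fun x => u x - c * v x) = fun x => deriv u x - c * deriv v x := by
  funext x
  rw [deriv_fun_sub (hu x) ((hv x).const_mul c), deriv_const_mul c (hv x)]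

theorem T4_sub_const_mul {r q u v : ℝ → ℝ} (c : ℝ)
    (hu : ContDiff ℝ 2 u) (hv : ContDiff ℝ 2 v)
    (hru : Differentiable ℝ (fun x => r x * deriv (deriv u) x))
    (hrv : Differentiable ℝ (fun x => r x * deriv (deriv v) x)) :
    T4 r q (fun x => u x - c * v x) = fun x => T4 r q u x - c * T4 r q v x := by
  have hu' := hu.differentiable two_ne_zero
  have hv' := hv.differentiable two_ne_zero
  have hr : (fun x => r x * deriv (deriv (fun x => u x - c * v x)) x)
      = fun x => r x * deriv (deriv u) x - c * (r x * deriv (deriv v) x) := by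
    rw [deriv_sub_const_mul c hu' hv', deriv_sub_const_mul c
      (hu.deriv'.differentiable one_ne_zero) (hv.deriv'.differentiable one_ne_zero)]
    funext x
    ring
  funext x
  simp only [T4]
  rw [hr, deriv_sub_const_mul c hru hrv, deriv_sub_const_mul c hu' hv']
  ring

/- `IsSol4` only speaks about `deriv`, which is `0` where `Ty` is not differentiable;
a nonzero right-hand side therefore forces differentiability. -/
theorem IsSol4.hasDerivAt_T4 {r p q y : ℝ → ℝ} (h : IsSol4 r p q y) {x : ℝ}
    (hx : p x * y x ≠ 0) : HasDerivAt (T4 r q y) (p x * y x) x := by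
  rw [← h x] at hx ⊢
  exact (differentiableAt_of_deriv_ne_zero hx).hasDerivAt

theorem continuous_T4 {r q y : ℝ → ℝ} (hq : Continuous q) (hy : ContDiff ℝ 1 y)
    (hry : ContDiff ℝ 1 (fun x => r x * deriv (deriv y) x)) : Continuous (T4 r q y) :=
  (hry.continuous_deriv le_rfl).sub (hq.mul (hy.continuous_deriv le_rfl))

theorem hasDerivAt_tauHat {r p q u v : ℝ → ℝ} {x : ℝ} (hu : DifferentiableAt ℝ u x)
    (hv : DifferentiableAt ℝ v x) (hTu : HasDerivAt (T4 r q u) (p x * u x) x)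
    (hTv : HasDerivAt (T4 r q v) (p x * v x) x) :
    HasDerivAt (tauHat r q u v) (deriv u x * T4 r q v x - deriv v x * T4 r q u x) x := by
  refine ((hu.hasDerivAt.fun_mul hTv).fun_sub (hv.hasDerivAt.fun_mul hTu)).congr_deriv ?_
  ring

theorem T4_sub_div_mul_T4_eq_zero {r p q u v : ℝ → ℝ} {b : ℝ}
    (hu : DifferentiableAt ℝ u b) (hv : DifferentiableAt ℝ v b)
    (hTu : HasDerivAt (T4 r q u) (p b * u b) b) (hTv : HasDerivAt (T4 r q v) (p b * v b) b)
    (hv' : deriv v b ≠ 0)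
    (hτ : deriv (tauHat r q u v) b = 0) :
    T4 r q u b - deriv u b / deriv v b * T4 r q v b = 0 := by
  rw [(hasDerivAt_tauHat hu hv hTu hTv).deriv] at hτ
  field_simp
  linarith

noncomputable def derivWronskian (r u v : ℝ → ℝ) : ℝ → ℝ :=
  fun x => r x * deriv (deriv u) x * deriv v x - r x * deriv (deriv v) x * deriv u x

theorem hasDerivAt_derivWronskian {r q u v : ℝ → ℝ} {x : ℝ}
    (hru : DifferentiableAt ℝ (fun x => r x * deriv (deriv u) x) x)
    (hrv : DifferentiableAt ℝ (fun x => r x * deriv (deriv v) x) x)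
    (hu : DifferentiableAt ℝ (deriv u) x) (hv : DifferentiableAt ℝ (deriv v) x) :
    HasDerivAt (derivWronskian r u v) (T4 r q u x * deriv v x - T4 r q v x * deriv u x) x := by
  refine ((hru.hasDerivAt.fun_mul hv.hasDerivAt).fun_sub
    (hrv.hasDerivAt.fun_mul hu.hasDerivAt)).congr_deriv ?_
  simp only [T4]
  ring

section FocalInterval

variable {a b : ℝ} {r p q u v : ℝ → ℝ}

theorem derivWronskian_eq_neg_tauHat (hq : Continuous q)
    (hu : ContDiff ℝ 2 u) (hv : ContDiff ℝ 2 v)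
    (hru : ContDiff ℝ 2 (fun x => r x * deriv (deriv u) x))
    (hrv : ContDiff ℝ 2 (fun x => r x * deriv (deriv v) x))
    (hTu : ∀ x ∈ Ioo a b, HasDerivAt (T4 r q u) (p x * u x) x)
    (hTv : ∀ x ∈ Ioo a b, HasDerivAt (T4 r q v) (p x * v x) x)
    (hua : u a = 0) (hva : v a = 0) (hrua : r a * deriv (deriv u) a = 0)
    (hrva : r a * deriv (deriv v) a = 0) :
    ∀ x ∈ Icc a b, derivWronskian r u v x = -tauHat r q u v x := by
  have hu' : ContDiff ℝ 1 (deriv u) := hu.deriv'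
  have hv' : ContDiff ℝ 1 (deriv v) := hv.deriv'
  have hcont : Continuous (derivWronskian r u v + tauHat r q u v) :=
    ((hru.continuous.mul hv'.continuous).sub (hrv.continuous.mul hu'.continuous)).add
      ((hu.continuous.mul (continuous_T4 hq (hv.of_le one_le_two) (hrv.of_le one_le_two))).sub
        (hv.continuous.mul (continuous_T4 hq (hu.of_le one_le_two) (hru.of_le one_le_two))))
  intro x hx
  have := eq_of_hasDerivAt_eq_zero hx.1 hcont.continuousOn fun y hy => ?_
  · simpa [derivWronskian, tauHat, hua, hva, hrua, hrva, add_eq_zero_iff_eq_neg] using this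
  replace hy : y ∈ Ioo a b := ⟨hy.1, hy.2.trans_le hx.2⟩
  refine ((hasDerivAt_derivWronskian (q := q) (hru.differentiable two_ne_zero y)
    (hrv.differentiable two_ne_zero y) (hu'.differentiable one_ne_zero y)
    (hv'.differentiable one_ne_zero y)).add (hasDerivAt_tauHat (hu.differentiable two_ne_zero y)
    (hv.differentiable two_ne_zero y) (hTu y hy) (hTv y hy))).congr_deriv ?_
  ring

theorem strictAntiOn_deriv_div_deriv (hq : Continuous q) (hr : ∀ x ∈ Ioo a b, 0 < r x)
    (hu : ContDiff ℝ 2 u) (hv : ContDiff ℝ 2 v)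
    (hru : ContDiff ℝ 2 (fun x => r x * deriv (deriv u) x))
    (hrv : ContDiff ℝ 2 (fun x => r x * deriv (deriv v) x))
    (hTu : ∀ x ∈ Ioo a b, HasDerivAt (T4 r q u) (p x * u x) x)
    (hTv : ∀ x ∈ Ioo a b, HasDerivAt (T4 r q v) (p x * v x) x)
    (hua : u a = 0) (hva : v a = 0) (hrua : r a * deriv (deriv u) a = 0)
    (hrva : r a * deriv (deriv v) a = 0) (hv' : ∀ x ∈ Ioc a b, 0 < deriv v x)
    (hτ : ∀ x ∈ Ioo a b, 0 < tauHat r q u v x) :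
    StrictAntiOn (fun x => deriv u x / deriv v x) (Ioc a b) := by
  have hW := derivWronskian_eq_neg_tauHat hq hu hv hru hrv hTu hTv hua hva hrua hrva
  refine strictAntiOn_div_of_deriv_mul_sub_mul_deriv_neg (convex_Ioc a b)
    (hu.deriv'.differentiable one_ne_zero) (hv.deriv'.differentiable one_ne_zero)
    (fun x hx => (hv' x hx).ne') fun x hx => ?_
  rw [interior_Ioc] at hx
  refine neg_of_mul_neg_right ?_ (hr x hx).le
  have hWx := hW x (Ioo_subset_Icc_self hx)
  have hτx := hτ x hx
  simp only [derivWronskian] at hWx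
  linarith

end FocalInterval

theorem focal_eigenfunction_properties_general
    (a b : ℝ) (r p q u v : ℝ → ℝ)
    (hqc : Continuous q)
    (hrpos : ∀ x ∈ Ici a, 0 < r x) (hppos : ∀ x ∈ Ici a, 0 < p x)
    (hu : ContDiff ℝ 4 u) (hv : ContDiff ℝ 4 v)
    (hru : ContDiff ℝ 2 (fun x => r x * deriv (deriv u) x))
    (hrv : ContDiff ℝ 2 (fun x => r x * deriv (deriv v) x))
    (husol : IsSol4 r p q u) (hvsol : IsSol4 r p q v)
    (hic : FundIC r q a u v)
    (hb : a < b) (hbz : deriv (tauHat r q u v) b = 0)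
    (hupos : ∀ x ∈ Ioc a b, 0 < u x ∧ 0 < deriv u x ∧ 0 < T4 r q u x)
    (hvpos : ∀ x ∈ Ioc a b, 0 < v x ∧ 0 < deriv v x ∧ 0 < T4 r q v x)
    (htau : ∀ x ∈ Ioc a b, 0 < tauHat r q u v x) :
    ∀ y : ℝ → ℝ, (∀ x, y x = u x - (deriv u b / deriv v b) * v x) →
      deriv y b = 0 ∧ T4 r q y b = 0 ∧ y a = 0 ∧ r a * deriv (deriv y) a = 0 ∧
      ∀ x ∈ Ioo a b, 0 < y x ∧ 0 < deriv y x ∧ T4 r q y x < 0 := by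
  obtain ⟨hua, hrua, -, -, hva, -, hrva, -⟩ := hic
  have hu₂ : ContDiff ℝ 2 u := hu.of_le (by norm_num)
  have hv₂ : ContDiff ℝ 2 v := hv.of_le (by norm_num)
  have hu' := hu₂.differentiable two_ne_zero
  have hv' := hv₂.differentiable two_ne_zero
  have hTu : ∀ x ∈ Ioc a b, HasDerivAt (T4 r q u) (p x * u x) x := fun x hx =>
    husol.hasDerivAt_T4 (mul_pos (hppos x hx.1.le) (hupos x hx).1).ne'
  have hTv : ∀ x ∈ Ioc a b, HasDerivAt (T4 r q v) (p x * v x) x := fun x hx =>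
    hvsol.hasDerivAt_T4 (mul_pos (hppos x hx.1.le) (hvpos x hx).1).ne'
  have hδ := strictAntiOn_deriv_div_deriv hqc (fun x hx => hrpos x hx.1.le) hu₂ hv₂ hru hrv
    (fun x hx => hTu x (Ioo_subset_Ioc_self hx)) (fun x hx => hTv x (Ioo_subset_Ioc_self hx))
    hua hva hrua hrva (fun x hx => (hvpos x hx).2.1) (fun x hx => htau x (Ioo_subset_Ioc_self hx))
  intro y hy
  obtain rfl : y = fun x => u x - deriv u b / deriv v b * v x := funext hy
  have hb' : b ∈ Ioc a b := right_mem_Ioc.2 hb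
  have hv'b : deriv v b ≠ 0 := (hvpos b hb').2.1.ne'
  have hTyb := T4_sub_div_mul_T4_eq_zero (hu' b) (hv' b) (hTu b hb') (hTv b hb') hv'b hbz
  set c := deriv u b / deriv v b
  have hy'pos : ∀ x ∈ Ioo a b, 0 < deriv u x - c * deriv v x := fun x hx =>
    sub_div_mul_pos_of_strictAntiOn hδ (Ioo_subset_Ioc_self hx) hb' hx.2
      (hvpos x (Ioo_subset_Ioc_self hx)).2.1
  have hypos := pos_of_hasDerivAt_pos (f := fun x => u x - c * v x)
    (hu'.continuous.sub (continuous_const.mul hv'.continuous)).continuousOn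
    (fun x _ => (hu' x).hasDerivAt.fun_sub ((hv' x).hasDerivAt.const_mul c)) hy'pos
    (by simp [hua, hva])
  rw [T4_sub_const_mul c hu₂ hv₂ (hru.differentiable two_ne_zero)
      (hrv.differentiable two_ne_zero), deriv_sub_const_mul c hu' hv',
    deriv_sub_const_mul c (hu₂.deriv'.differentiable one_ne_zero)
      (hv₂.deriv'.differentiable one_ne_zero)]
  refine ⟨by simp [c, hv'b], hTyb, by simp [hua, hva], by linear_combination hrua - c * hrva,
    fun x hx => ⟨hypos x (Ioo_subset_Ioc_self hx), hy'pos x hx, ?_⟩⟩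
  exact neg_of_hasDerivAt_pos (fun x hx => (hTu x hx).sub ((hTv x hx).const_mul c))
    (fun x hx => by nlinarith [mul_pos (hppos x hx.1.le) (hypos x (Ioo_subset_Ioc_self hx))])
    hTyb x hx

/-- The eigenfunction `y = u - (u'(μ̂₁)/v'(μ̂₁)) v` realizing the first systems-focal
point `μ̂₁(a) = b` satisfies `y'(μ̂₁) = Ty(μ̂₁) = 0`, `y(a) = (r y'')(a) = 0`, and
`y > 0`, `y' > 0`, `Ty < 0` on `(a, μ̂₁)`. -/
theorem focal_eigenfunction_properties
    (a b : ℝ) (r p q u v : ℝ → ℝ)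
    (hrc : Continuous r) (hpc : Continuous p) (hqc : Continuous q)
    (hrpos : ∀ x ∈ Ici a, 0 < r x) (hppos : ∀ x ∈ Ici a, 0 < p x)
    (hu : ContDiff ℝ 4 u) (hv : ContDiff ℝ 4 v)
    (hru : ContDiff ℝ 2 (fun x => r x * deriv (deriv u) x))
    (hrv : ContDiff ℝ 2 (fun x => r x * deriv (deriv v) x))
    (husol : IsSol4 r p q u) (hvsol : IsSol4 r p q v)
    (hic : FundIC r q a u v)
    (hb : a < b) (hbz : deriv (tauHat r q u v) b = 0)
    (hbmin : ∀ x ∈ Ioo a b, deriv (tauHat r q u v) x ≠ 0)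
    (hupos : ∀ x ∈ Ioc a b, 0 < u x ∧ 0 < deriv u x ∧ 0 < T4 r q u x)
    (hvpos : ∀ x ∈ Ioc a b, 0 < v x ∧ 0 < deriv v x ∧ 0 < T4 r q v x)
    (htau : ∀ x ∈ Ioc a b, 0 < tauHat r q u v x) :
    ∀ y : ℝ → ℝ, (∀ x, y x = u x - (deriv u b / deriv v b) * v x) →
      deriv y b = 0 ∧ T4 r q y b = 0 ∧ y a = 0 ∧ r a * deriv (deriv y) a = 0 ∧
      ∀ x ∈ Ioo a b, 0 < y x ∧ 0 < deriv y x ∧ T4 r q y x < 0 :=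
  focal_eigenfunction_properties_general a b r p q u v hqc hrpos hppos hu hv hru hrv husol hvsol hic
    hb hbz hupos hvpos htau
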